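/- arXiv:2504.19396 — 5 statements merged into one kernel-verified Lean document; each statement's English description precedes it below -/
import Mathlib

section
/- Let 1/2 < p1 < 1, let r, q be positive coprime integers with a = r/q > 1, set k_i = floor((i+1)/a) + 1, and suppose r > k for some positive integer k. Then the absolute difference between S_r / (1 - 2 p1^q (1-p1)^r) and S_infty is less than (1/2)^{k-1}, where S_r = sum_{i=0}^{r-1} (1-p1)^i p1^{k_i} and S_infty = sum_{i=0}^{infty} (1-p1)^i p1^{k_i}. -/
/-!
Since `a = r / q`, the exponents `k_i = ⌊(i + 1) q / r⌋ + 1` satisfy `k_(i + r) = k_i + q`, so the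
terms of `S_∞` satisfy `f (i + r) = c * f i` with `c = p1 ^ q * (1 - p1) ^ r`, whence
`S_∞ = S_r / (1 - c)`. The difference to bound is then `S_r c / ((1 - 2c)(1 - c))`; as `S_r ≤ 1`
and `c < 2⁻ʳ ≤ 2⁻⁽ᵏ⁺¹⁾ ≤ 1/4`, it is at most `4c < (1/2) ^ (k - 1)`.
-/

open Finset

def cascadeExp (r q i : ℕ) : ℕ := (i + 1) * q / r + 1

lemma floor_toNat_eq_cascadeExp (r q i : ℕ) :
    (⌊((i : ℝ) + 1) / ((r : ℝ) / q)⌋ + 1).toNat = cascadeExp r q i := by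
  have hdiv : ((i : ℝ) + 1) / ((r : ℝ) / q) = (((i + 1) * q : ℕ) : ℝ) / (r : ℕ) := by
    push_cast; rw [div_div_eq_mul_div]
  have hnat : ⌊((i : ℝ) + 1) / ((r : ℝ) / q)⌋₊ = (i + 1) * q / r := by
    rw [hdiv, Nat.floor_div_eq_div]
  have hnonneg : 0 ≤ ⌊((i : ℝ) + 1) / ((r : ℝ) / q)⌋ := Int.floor_nonneg.mpr (by positivity)
  have := Int.floor_toNat (((i : ℝ) + 1) / ((r : ℝ) / q))
  unfold cascadeExp
  omega

lemma cascadeExp_add_period {r : ℕ} (hr : 0 < r) (q i : ℕ) :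
    cascadeExp r q (i + r) = cascadeExp r q i + q := by
  unfold cascadeExp
  rw [show (i + r + 1) * q = (i + 1) * q + r * q by ring, Nat.add_mul_div_left _ _ hr]
  ring

lemma tsum_eq_sum_range_div_of_add_eq_mul {K : Type*} [Field K] [TopologicalSpace K]
    [IsTopologicalRing K] [T2Space K] {f : ℕ → K} (hf : Summable f) {r : ℕ} {c : K}
    (hc : c ≠ 1) (hshift : ∀ i, f (i + r) = c * f i) :
    ∑' i, f i = (∑ i ∈ range r, f i) / (1 - c) := by
  have hsplit := hf.sum_add_tsum_nat_add r
  simp only [hshift, hf.tsum_mul_left] at hsplit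
  rw [eq_div_iff (sub_ne_zero.mpr hc.symm)]
  linear_combination -hsplit

lemma summable_pow_mul_pow {x p : ℝ} (hx0 : 0 ≤ x) (hx1 : x < 1) (hp0 : 0 ≤ p) (hp1 : p ≤ 1)
    (κ : ℕ → ℕ) : Summable fun i => x ^ i * p ^ κ i :=
  (summable_geometric_of_lt_one hx0 hx1).of_nonneg_of_le (fun i => by positivity)
    fun i => mul_le_of_le_one_right (pow_nonneg hx0 i) (pow_le_one₀ hp0 hp1)

lemma sum_range_one_sub_pow_mul_pow_le_one {p : ℝ} (hp0 : 0 ≤ p) (hp1 : p ≤ 1) {κ : ℕ → ℕ}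
    (hκ : ∀ i, 1 ≤ κ i) (r : ℕ) : ∑ i ∈ range r, (1 - p) ^ i * p ^ κ i ≤ 1 := by
  have hx0 : 0 ≤ 1 - p := by linarith
  calc ∑ i ∈ range r, (1 - p) ^ i * p ^ κ i
      ≤ ∑ i ∈ range r, (1 - p) ^ i * p :=
        sum_le_sum fun i _ => mul_le_mul_of_nonneg_left
          (pow_le_of_le_one hp0 hp1 (Nat.one_le_iff_ne_zero.mp (hκ i))) (pow_nonneg hx0 i)
    _ = 1 - (1 - p) ^ r := by rw [← sum_mul, ← geom_sum_mul_neg, sub_sub_cancel]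
    _ ≤ 1 := sub_le_self _ (pow_nonneg hx0 r)

lemma abs_div_one_sub_two_mul_sub_div_one_sub_le {S c : ℝ} (hS0 : 0 ≤ S) (hS1 : S ≤ 1)
    (hc0 : 0 ≤ c) (hc : c ≤ 1 / 4) : |S / (1 - 2 * c) - S / (1 - c)| ≤ 4 * c := by
  have hd1 : 0 < 1 - 2 * c := by linarith
  have hd2 : 0 < 1 - c := by linarith
  have hdiff : S / (1 - 2 * c) - S / (1 - c) = S * c / ((1 - 2 * c) * (1 - c)) := by
    field_simp; ring
  have hprod : 1 / 4 ≤ (1 - 2 * c) * (1 - c) := by nlinarith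
  rw [hdiff, abs_of_nonneg (by positivity), div_le_iff₀ (by positivity)]
  calc S * c ≤ c := mul_le_of_le_one_left hc0 hS1
    _ = 4 * c * (1 / 4) := by ring
    _ ≤ 4 * c * ((1 - 2 * c) * (1 - c)) := by gcongr

theorem rational_irrational_formula_close_general (p1 : ℝ) (h1 : 1/2 < p1) (h1' : p1 < 1)
    (r q k : ℕ)
    (a : ℝ) (ha : a = (r : ℝ) / (q : ℝ))
    (hk : 0 < k) (hrk : k < r)
    (ki : ℕ → ℕ) (hki : ∀ i, ki i = (⌊((i : ℝ) + 1) / a⌋ + 1).toNat) :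
    |(∑ i ∈ Finset.range r, (1 - p1) ^ i * p1 ^ (ki i)) / (1 - 2 * p1 ^ q * (1 - p1) ^ r)
      - (∑' i : ℕ, (1 - p1) ^ i * p1 ^ (ki i))| < (1/2 : ℝ) ^ (k - 1) := by
  have hr : 0 < r := by omega
  have hp0 : 0 ≤ p1 := by linarith
  have hx0 : 0 ≤ 1 - p1 := by linarith
  obtain rfl : ki = cascadeExp r q := funext fun i => by rw [hki, ha, floor_toNat_eq_cascadeExp]
  set c := p1 ^ q * (1 - p1) ^ r with hc_def
  have hc0 : 0 ≤ c := by positivity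
  have hc : c < (1 / 2) ^ (k + 1) :=
    calc c ≤ (1 - p1) ^ r := mul_le_of_le_one_left (pow_nonneg hx0 r) (pow_le_one₀ hp0 h1'.le)
      _ < (1 / 2) ^ r := pow_lt_pow_left₀ (by linarith) hx0 hr.ne'
      _ ≤ (1 / 2) ^ (k + 1) := pow_le_pow_of_le_one (by norm_num) (by norm_num) hrk
  have hc4 : c ≤ 1 / 4 := by
    have : (1 / 2 : ℝ) ^ (k + 1) ≤ (1 / 2) ^ 2 :=
      pow_le_pow_of_le_one (by norm_num) (by norm_num) (by omega)
    linarith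
  have hS : ∑' i, (1 - p1) ^ i * p1 ^ cascadeExp r q i
      = (∑ i ∈ range r, (1 - p1) ^ i * p1 ^ cascadeExp r q i) / (1 - c) :=
    tsum_eq_sum_range_div_of_add_eq_mul (summable_pow_mul_pow hx0 (by linarith) hp0 h1'.le _)
      (by linarith : c < 1).ne fun i => by rw [cascadeExp_add_period hr, hc_def]; ring
  rw [hS, show 1 - 2 * p1 ^ q * (1 - p1) ^ r = 1 - 2 * c by ring]
  calc _ ≤ 4 * c := abs_div_one_sub_two_mul_sub_div_one_sub_le
        (sum_nonneg fun i _ => by positivity)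
        (sum_range_one_sub_pow_mul_pow_le_one hp0 h1'.le (fun _ => Nat.le_add_left 1 _) r) hc0 hc4
    _ < 4 * (1 / 2) ^ (k + 1) := by linarith
    _ = (1 / 2) ^ (k - 1) := by rw [show k + 1 = k - 1 + 2 by omega, pow_add]; ring

theorem rational_irrational_formula_close (p1 : ℝ) (h1 : 1/2 < p1) (h1' : p1 < 1)
    (r q k : ℕ) (hr : 0 < r) (hq : 0 < q) (hco : Nat.Coprime r q)
    (a : ℝ) (ha : a = (r : ℝ) / (q : ℝ)) (ha1 : 1 < a)
    (hk : 0 < k) (hrk : k < r)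
    (ki : ℕ → ℕ) (hki : ∀ i, ki i = (⌊((i : ℝ) + 1) / a⌋ + 1).toNat) :
    |(∑ i ∈ Finset.range r, (1 - p1) ^ i * p1 ^ (ki i)) / (1 - 2 * p1 ^ q * (1 - p1) ^ r)
      - (∑' i : ℕ, (1 - p1) ^ i * p1 ^ (ki i))| < (1/2 : ℝ) ^ (k - 1) :=
  rational_irrational_formula_close_general p1 h1 h1' r q k a ha hk hrk ki hki
end

section
/- Fix 1/2 < p1 < 1 and define a(c) = log(p1/(1-p2-c)) / log((p2+c)/(1-p1)) for c with 1/2 < p1 <= p2 + c < 1. Then a is a strictly increasing function of c on this domain. -/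
/-!
Writing `x = p2 + c` and `q = 1 - p1`, the constant is `N x / D x` with `N x = log p1 - log (1 - x)`
and `D x = log x - log q`, where `N' = 1 / (1 - x)` and `D' = 1 / x`. The sign of the derivative is
that of `x D - (1 - x) N = x log (x / q) + (1 - x) log ((1 - x) / (1 - q))`, the Kullback–Leibler
divergence between the Bernoulli laws of parameters `x` and `q`; it is positive by Gibbs'
inequality because `x ≥ p1 > 1/2 > q`.
-/

open Real Set

lemma mul_log_sub_log_le_sub {a b : ℝ} (ha : 0 < a) (hb : 0 < b) :
    a * (log b - log a) ≤ b - a := by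
  have h := log_le_sub_one_of_pos (div_pos hb ha)
  rw [log_div hb.ne' ha.ne'] at h
  calc a * (log b - log a) ≤ a * (b / a - 1) := mul_le_mul_of_nonneg_left h ha.le
    _ = b - a := by field_simp

lemma mul_log_sub_log_lt_sub {a b : ℝ} (ha : 0 < a) (hb : 0 < b) (hab : a ≠ b) :
    a * (log b - log a) < b - a := by
  have h := log_lt_sub_one_of_pos (div_pos hb ha)
    (by rwa [ne_eq, div_eq_one_iff_eq ha.ne', eq_comm])
  rw [log_div hb.ne' ha.ne'] at h
  calc a * (log b - log a) < a * (b / a - 1) := mul_lt_mul_of_pos_left h ha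
    _ = b - a := by field_simp

lemma binary_gibbs_strict {x q : ℝ} (hx : 0 < x) (hx1 : x < 1) (hq : 0 < q) (hq1 : q < 1)
    (hxq : x ≠ q) :
    x * (log q - log x) + (1 - x) * (log (1 - q) - log (1 - x)) < 0 := by
  have h₁ := mul_log_sub_log_lt_sub hx hq hxq
  have h₂ := mul_log_sub_log_le_sub (sub_pos.2 hx1) (sub_pos.2 hq1)
  linarith

/-- The cascade constant as a function of `x = p2 + c`, with `p = p1`. -/
noncomputable def cascadeRatio (p x : ℝ) : ℝ :=
  (log p - log (1 - x)) / (log x - log (1 - p))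

lemma log_sub_log_one_sub_pos {p x : ℝ} (hp : 1 / 2 < p) (hpx : p ≤ x) (hx1 : x < 1) :
    0 < log x - log (1 - p) :=
  sub_pos.2 (log_lt_log (by linarith) (by linarith))

lemma cascadeRatio_hasDerivAt {p x : ℝ} (hx : 0 < x) (hx1 : x < 1)
    (hD : log x - log (1 - p) ≠ 0) :
    HasDerivAt (cascadeRatio p)
      (((1 - x)⁻¹ * (log x - log (1 - p)) - (log p - log (1 - x)) * x⁻¹) /
        (log x - log (1 - p)) ^ 2) x := by
  have hN : HasDerivAt (fun y => log p - log (1 - y)) (1 - x)⁻¹ x := by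
    have := ((hasDerivAt_id x).const_sub 1).log (sub_pos.2 hx1).ne'
    simpa [div_eq_mul_inv] using this.const_sub (log p)
  have hD' : HasDerivAt (fun y => log y - log (1 - p)) x⁻¹ x :=
    (hasDerivAt_log hx.ne').sub_const _
  exact hN.div hD' hD

lemma cascadeRatio_strictMonoOn {p : ℝ} (hp : 1 / 2 < p) :
    StrictMonoOn (cascadeRatio p) (Ico p 1) := by
  refine strictMonoOn_of_hasDerivWithinAt_pos (convex_Ico p 1)
    (f' := fun x => ((1 - x)⁻¹ * (log x - log (1 - p)) - (log p - log (1 - x)) * x⁻¹) /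
      (log x - log (1 - p)) ^ 2) ?_ ?_ ?_
  · rintro x ⟨hpx, hx1⟩
    have hD := log_sub_log_one_sub_pos hp hpx hx1
    exact (cascadeRatio_hasDerivAt (by linarith) hx1 hD.ne').continuousAt.continuousWithinAt
  · rw [interior_Ico]
    rintro x ⟨hpx, hx1⟩
    have hD := log_sub_log_one_sub_pos hp hpx.le hx1
    exact (cascadeRatio_hasDerivAt (by linarith) hx1 hD.ne').hasDerivWithinAt
  · rw [interior_Ico]
    rintro x ⟨hpx, hx1⟩
    have hx0 : 0 < x := by linarith
    have h1x : 0 < 1 - x := by linarith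
    have hgibbs := binary_gibbs_strict (q := 1 - p) hx0 hx1 (by linarith) (by linarith)
      (by linarith)
    rw [sub_sub_cancel] at hgibbs
    have hnum : (1 - x)⁻¹ * (log x - log (1 - p)) - (log p - log (1 - x)) * x⁻¹ =
        -(x * (log (1 - p) - log x) + (1 - x) * (log p - log (1 - x))) / (x * (1 - x)) := by
      field_simp
      ring
    rw [hnum]
    exact div_pos (div_pos (by linarith) (by positivity))
      (pow_pos (log_sub_log_one_sub_pos hp hpx.le hx1) 2)

theorem cascade_constant_incr_in_p2_general (p1 p2 : ℝ) (h1 : 1/2 < p1) :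
    StrictMonoOn (fun c : ℝ => Real.log (p1 / (1 - p2 - c)) / Real.log ((p2 + c) / (1 - p1)))
      {c : ℝ | p1 ≤ p2 + c ∧ p2 + c < 1} := by
  have hshift : StrictMonoOn (cascadeRatio p1 ∘ (p2 + ·)) {c : ℝ | p1 ≤ p2 + c ∧ p2 + c < 1} :=
    (cascadeRatio_strictMonoOn h1).comp ((strictMono_id.const_add p2).strictMonoOn _) fun _ hc => hc
  refine hshift.congr fun c ⟨hpc, hc1⟩ => ?_
  simp only [Function.comp_apply, cascadeRatio, sub_sub]
  rw [log_div (by linarith) (by linarith), log_div (by linarith) (by linarith)]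

theorem cascade_constant_incr_in_p2 (p1 p2 : ℝ) (h1 : 1/2 < p1) (h1' : p1 < 1) :
    StrictMonoOn (fun c : ℝ => Real.log (p1 / (1 - p2 - c)) / Real.log ((p2 + c) / (1 - p1)))
      {c : ℝ | p1 ≤ p2 + c ∧ p2 + c < 1} :=
  cascade_constant_incr_in_p2_general p1 p2 h1
end

section
/- Fix 1/2 < p2 < 1 and define a(c) = log((p1+c)/(1-p2)) / log(p2/(1-p1-c)) for c with 1/2 < p1 + c < p2 < 1. Then a is a strictly decreasing function of c on this domain. -/
/-!
With `x = p1 + c` and `G x = log (x (1 - x))`, the numerator of the cascade constant exceeds its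
denominator `log p2 - log (1 - x)` by exactly `G x - G p2`, so
`a = 1 + (G x - G p2) / (log p2 - log (1 - x))`.
On `1/2 < x < p2` the fraction has a positive, strictly decreasing numerator (`x (1 - x)` decreases
on `[1/2, 1)`) and a positive, strictly increasing denominator, hence it strictly decreases.
-/

open Real Set

lemma StrictAntiOn.div_of_strictMonoOn {α 𝕜 : Type*} [Preorder α] [Field 𝕜] [LinearOrder 𝕜]
    [IsStrictOrderedRing 𝕜] {f g : α → 𝕜} {s : Set α} (hf : StrictAntiOn f s)
    (hg : StrictMonoOn g s) (hf0 : ∀ x ∈ s, 0 ≤ f x) (hg0 : ∀ x ∈ s, 0 < g x) :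
    StrictAntiOn (fun x => f x / g x) s := by
  intro a ha b hb hab
  calc f b / g b < f a / g b := div_lt_div_of_pos_right (hf ha hb hab) (hg0 b hb)
    _ ≤ f a / g a := div_le_div_of_nonneg_left (hf0 a ha) (hg0 a ha) (hg ha hb hab).le

lemma strictAntiOn_log_mul_one_sub :
    StrictAntiOn (fun x : ℝ => log (x * (1 - x))) (Ico (1/2) 1) := by
  rintro a ⟨ha, -⟩ b ⟨hb, hb1⟩ hab
  exact log_lt_log (by nlinarith) (by nlinarith)

lemma log_div_div_log_div_eq_one_add {x q : ℝ} (hx0 : 0 < x) (hx1 : x < 1) (hq0 : 0 < q)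
    (hq1 : q < 1) (hne : 1 - x ≠ q) :
    log (x / (1 - q)) / log (q / (1 - x)) =
      1 + (log (x * (1 - x)) - log (q * (1 - q))) / (log q - log (1 - x)) := by
  have hden : log q - log (1 - x) ≠ 0 :=
    sub_ne_zero.mpr fun h => hne (log_injOn_pos (by simpa using hx1) hq0 h.symm)
  rw [log_div hx0.ne' (by linarith), log_div hq0.ne' (by linarith), log_mul hx0.ne' (by linarith),
    log_mul hq0.ne' (by linarith), one_add_div hden]
  ring

theorem strictAntiOn_log_div_div_log_div {q : ℝ} (hq : q < 1) :
    StrictAntiOn (fun x : ℝ => log (x / (1 - q)) / log (q / (1 - x))) (Ioo (1/2) q) := by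
  have hsub : Ioo (1/2) q ⊆ Ico (1/2) 1 := fun x hx => ⟨hx.1.le, hx.2.trans hq⟩
  have hexcess : StrictAntiOn (fun x : ℝ => log (x * (1 - x)) - log (q * (1 - q))) (Ioo (1/2) q) :=
    fun a ha b hb hab => sub_lt_sub_right (strictAntiOn_log_mul_one_sub (hsub ha) (hsub hb) hab) _
  have hden : StrictMonoOn (fun x : ℝ => log q - log (1 - x)) (Ioo (1/2) q) :=
    fun a ha b hb hab => sub_lt_sub_left (log_lt_log (by linarith [hb.2]) (by linarith)) _
  have hexcess0 : ∀ x ∈ Ioo (1/2) q, 0 ≤ log (x * (1 - x)) - log (q * (1 - q)) := fun x hx =>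
    sub_nonneg.mpr (strictAntiOn_log_mul_one_sub (hsub hx) ⟨(hx.1.trans hx.2).le, hq⟩ hx.2).le
  have hden0 : ∀ x ∈ Ioo (1/2) q, 0 < log q - log (1 - x) := fun x ⟨hx1, hx2⟩ =>
    sub_pos.mpr (log_lt_log (by linarith) (by linarith))
  refine ((hexcess.div_of_strictMonoOn hden hexcess0 hden0).const_add 1).congr fun x hx => ?_
  obtain ⟨hx1, hx2⟩ := hx
  exact (log_div_div_log_div_eq_one_add (by linarith) (by linarith) (by linarith) hq
    (by linarith)).symm

theorem cascade_constant_decr_in_p1_general (p1 p2 : ℝ) (h2' : p2 < 1) :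
    StrictAntiOn (fun c : ℝ => Real.log ((p1 + c) / (1 - p2)) / Real.log (p2 / (1 - p1 - c)))
      {c : ℝ | 1/2 < p1 + c ∧ p1 + c < p2} := by
  have htrans : StrictMonoOn (fun c : ℝ => p1 + c) {c : ℝ | 1/2 < p1 + c ∧ p1 + c < p2} :=
    (strictMono_id.const_add p1).strictMonoOn _
  simpa only [sub_sub, Function.comp_def] using
    (strictAntiOn_log_div_div_log_div h2').comp_strictMonoOn htrans fun c hc => hc

theorem cascade_constant_decr_in_p1 (p1 p2 : ℝ) (h2 : 1/2 < p2) (h2' : p2 < 1) :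
    StrictAntiOn (fun c : ℝ => Real.log ((p1 + c) / (1 - p2)) / Real.log (p2 / (1 - p1 - c)))
      {c : ℝ | 1/2 < p1 + c ∧ p1 + c < p2} :=
  cascade_constant_decr_in_p1_general p1 p2 h2'
end

section
/- Fix p with 1/2 < p < 1, and for c with 0 <= c and 1/2 < p - c <= p + c < 1 set p1' = p - c and p2' = p + c and define a(c) = log(p1'/(1-p2')) / log(p2'/(1-p1')) = log((p-c)/(1-p-c)) / log((p+c)/(1-p+c)). Then a is an increasing function of c on 0 <= c < min(p - 1/2, 1 - p). -/
theorem cascade_constant_incr_double_side (p : ℝ) (hp : 1/2 < p) (hp' : p < 1) :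
    StrictMonoOn
      (fun c : ℝ => Real.log ((p - c) / (1 - p - c)) / Real.log ((p + c) / (1 - p + c)))
      (Set.Ico 0 (min (p - 1/2) (1 - p))) := by
  intro x hx y hy hxy
  obtain ⟨hx0, hxm⟩ := hx
  obtain ⟨hy0, hym⟩ := hy
  rw [lt_min_iff] at hxm hym
  have h1 : (0:ℝ) < 1 - p - y := by linarith [hym.2]
  have h2 : (0:ℝ) < 1 - p - x := by linarith [hxm.2]
  have h3 : (0:ℝ) < 1 - p + x := by linarith
  have h4 : (0:ℝ) < 1 - p + y := by linarith
  have hNx : 0 < Real.log ((p - x) / (1 - p - x)) := by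
    apply Real.log_pos
    rw [lt_div_iff₀ h2]; linarith
  have hNy : 0 < Real.log ((p - y) / (1 - p - y)) := by
    apply Real.log_pos
    rw [lt_div_iff₀ h1]; linarith
  have hDx : 0 < Real.log ((p + x) / (1 - p + x)) := by
    apply Real.log_pos
    rw [lt_div_iff₀ h3]; linarith
  have hDy : 0 < Real.log ((p + y) / (1 - p + y)) := by
    apply Real.log_pos
    rw [lt_div_iff₀ h4]; linarith
  have hN : Real.log ((p - x) / (1 - p - x)) < Real.log ((p - y) / (1 - p - y)) := by
    apply Real.log_lt_log
    · apply div_pos (by linarith [hxm.1]) h2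
    · rw [div_lt_div_iff₀ h2 h1]; nlinarith
  have hD : Real.log ((p + y) / (1 - p + y)) < Real.log ((p + x) / (1 - p + x)) := by
    apply Real.log_lt_log
    · apply div_pos (by linarith) h4
    · rw [div_lt_div_iff₀ h4 h3]; nlinarith
  exact div_lt_div₀ hN hD.le hNy.le hDy
end

section
/- Let a > 1 be irrational, 1/2 < p1 < p2 < 1, k_i = floor((i+1)/a)+1, and let h_i(c) = (1-p1)^i p1^{k_i(c)} - (1-p2-c)^{k_i(c)} (p2+c)^i where k_i(c) uses the cascade constant a(c) = log(p1/(1-p2-c))/log((p2+c)/(1-p1)). On any closed subinterval of (p1 - p2, 1 - p2), the series sum_{i=0}^{infty} h_i(c) converges uniformly in c. -/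
/-! Every term is dominated by `r ^ i` with `r = max (1 - p1) (p2 + t) < 1`, since both products
in `h i c` lie in `[0, r ^ i]`; the Weierstrass M-test against this geometric series does the rest. -/

theorem abs_pow_mul_pow_sub_pow_mul_pow_le {q p x y r : ℝ} (i k : ℕ)
    (hq : q ∈ Set.Icc 0 r) (hp : p ∈ Set.Icc 0 1) (hx : x ∈ Set.Icc 0 1) (hy : y ∈ Set.Icc 0 r) :
    |q ^ i * p ^ k - x ^ k * y ^ i| ≤ r ^ i := by
  have hqi : q ^ i ≤ r ^ i := pow_le_pow_left₀ hq.1 hq.2 i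
  have hyi : y ^ i ≤ r ^ i := pow_le_pow_left₀ hy.1 hy.2 i
  refine abs_sub_le_of_nonneg_of_le (by positivity [hq.1, hp.1]) ?_ (by positivity [hx.1, hy.1]) ?_
  · exact (mul_le_of_le_one_right (pow_nonneg hq.1 i) (pow_le_one₀ hp.1 hp.2)).trans hqi
  · exact (mul_le_of_le_one_left (pow_nonneg hy.1 i) (pow_le_one₀ hx.1 hx.2)).trans hyi

theorem uniform_convergence_of_diff_series_general (p1 p2 : ℝ)
    (h1 : 1/2 < p1) (h12 : p1 < p2) (h2 : p2 < 1)
    (kFun : ℝ → ℕ → ℕ)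
    (h : ℕ → ℝ → ℝ)
    (hdef : ∀ i c, h i c = (1 - p1) ^ i * p1 ^ (kFun c i)
        - (1 - p2 - c) ^ (kFun c i) * (p2 + c) ^ i)
    (s t : ℝ) (hs : p1 - p2 < s) (ht : t < 1 - p2) :
    TendstoUniformlyOn (fun N c => ∑ i ∈ Finset.range N, h i c)
      (fun c => ∑' i : ℕ, h i c) Filter.atTop (Set.Icc s t) := by
  set r := max (1 - p1) (p2 + t)
  have hr0 : 0 ≤ r := le_max_of_le_left (by linarith)
  have hr1 : r < 1 := max_lt (by linarith) (by linarith)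
  refine tendstoUniformlyOn_tsum_nat (summable_geometric_of_lt_one hr0 hr1) ?_
  rintro i c ⟨hsc, hct⟩
  rw [hdef, Real.norm_eq_abs]
  exact abs_pow_mul_pow_sub_pow_mul_pow_le i _
    ⟨by linarith, le_max_left _ _⟩ ⟨by linarith, by linarith⟩ ⟨by linarith, by linarith⟩
    ⟨by linarith, le_max_of_le_right (by linarith)⟩

theorem uniform_convergence_of_diff_series (p1 p2 : ℝ)
    (h1 : 1/2 < p1) (h12 : p1 < p2) (h2 : p2 < 1)
    (ha : 1 < Real.log (p1 / (1 - p2)) / Real.log (p2 / (1 - p1)))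
    (hirr : Irrational (Real.log (p1 / (1 - p2)) / Real.log (p2 / (1 - p1))))
    (aFun : ℝ → ℝ)
    (haFun : ∀ c, aFun c = Real.log (p1 / (1 - p2 - c)) / Real.log ((p2 + c) / (1 - p1)))
    (kFun : ℝ → ℕ → ℕ)
    (hkFun : ∀ c i, kFun c i = (⌊((i : ℝ) + 1) / aFun c⌋ + 1).toNat)
    (h : ℕ → ℝ → ℝ)
    (hdef : ∀ i c, h i c = (1 - p1) ^ i * p1 ^ (kFun c i)
        - (1 - p2 - c) ^ (kFun c i) * (p2 + c) ^ i)
    (s t : ℝ) (hs : p1 - p2 < s) (hst : s ≤ t) (ht : t < 1 - p2) :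
    TendstoUniformlyOn (fun N c => ∑ i ∈ Finset.range N, h i c)
      (fun c => ∑' i : ℕ, h i c) Filter.atTop (Set.Icc s t) :=
  uniform_convergence_of_diff_series_general p1 p2 h1 h12 h2 kFun h hdef s t hs ht
end
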